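/- arXiv:1805.09978 — 4 statements merged into one kernel-verified Lean document; each statement's English description precedes it below -/
import Mathlib

section
/- Clipping lemma for the PGFL: let A ∈ ℝ^{n×n} have all entries in [0,1], let ∇ be the edge incidence matrix of a graph G on {1,...,n}, and λ ≥ 0. For P ∈ ℝ^{n×n} let P̃ be its entrywise clipping to [0,1], i.e. P̃_{i,j} = min(max(P_{i,j},0),1). Then ‖A−P̃‖_F² + λ(‖∇P̃‖₁ + ‖∇P̃ᵀ‖₁) ≤ ‖A−P‖_F² + λ(‖∇P‖₁ + ‖∇Pᵀ‖₁), with strict inequality whenever some entry of P lies outside [0,1]. Consequently, every minimizer P̂ of P ↦ ‖A−P‖_F² + λ(‖∇P‖₁ + ‖∇Pᵀ‖₁) has all entries in [0,1]. -/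
open MeasureTheory ProbabilityTheory Matrix

namespace PGFL

/-- Sum of absolute values of all entries of a matrix. -/
def l1 {m n : ℕ} (B : Matrix (Fin m) (Fin n) ℝ) : ℝ := ∑ i, ∑ j, |B i j|

/-- Squared Frobenius norm of a matrix. -/
def frobSq {n : ℕ} (X : Matrix (Fin n) (Fin n) ℝ) : ℝ := ∑ i, ∑ j, (X i j) ^ 2

/-- Euclidean norm of a vector. -/
noncomputable def vecL2 {n : ℕ} (v : Fin n → ℝ) : ℝ := Real.sqrt (∑ i, (v i) ^ 2)

/-- `D` is an edge incidence matrix of the simple graph `G`: the rows of `D` enumerate the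
edges of `G`, each row having `+1` at one endpoint, `-1` at the other, `0` elsewhere. -/
def IsIncidence {n m : ℕ} (G : SimpleGraph (Fin n)) (D : Matrix (Fin m) (Fin n) ℝ) : Prop :=
  ∃ e : Fin m → Fin n × Fin n,
    (∀ k, G.Adj (e k).1 (e k).2) ∧
    (∀ i j : Fin n, G.Adj i j → ∃! k, e k = (i, j) ∨ e k = (j, i)) ∧
    (∀ k, D k = fun j => if j = (e k).1 then 1 else if j = (e k).2 then (-1 : ℝ) else 0)

/-- Objective of the power graph fused lasso. -/
def pgflObj {n m : ℕ} (D : Matrix (Fin m) (Fin n) ℝ) (A : Matrix (Fin n) (Fin n) ℝ)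
    (lam : ℝ) (P : Matrix (Fin n) (Fin n) ℝ) : ℝ :=
  frobSq (A - P) + lam * (l1 (D * P) + l1 (D * Pᵀ))

/-- `Phat` is a PGFL estimator (a minimizer of the PGFL objective). -/
def IsPGFL {n m : ℕ} (D : Matrix (Fin m) (Fin n) ℝ) (A : Matrix (Fin n) (Fin n) ℝ)
    (lam : ℝ) (Phat : Matrix (Fin n) (Fin n) ℝ) : Prop :=
  ∀ P, pgflObj D A lam Phat ≤ pgflObj D A lam P

/-- Entrywise maximum absolute value of a square matrix. -/
noncomputable def matSup {n : ℕ} (X : Matrix (Fin n) (Fin n) ℝ) : ℝ := ⨆ i, ⨆ j, |X i j|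

/-- A real random variable is `σ²`-subGaussian. -/
def IsSubG {Ω : Type*} [MeasurableSpace Ω] (μ : Measure Ω) (X : Ω → ℝ) (σ : ℝ) : Prop :=
  ∀ t : ℝ, ∫ ω, Real.exp (t * X ω) ∂μ ≤ Real.exp (σ ^ 2 * t ^ 2 / 2)

/-- A random variable is uniformly distributed on `[0,1]`. -/
def IsUniform01 {Ω : Type*} [MeasurableSpace Ω] (μ : Measure Ω) (X : Ω → ℝ) : Prop :=
  Measurable X ∧ Measure.map X μ = volume.restrict (Set.Icc (0 : ℝ) 1)


/-- Assumption 1: the graphon `f` has cross-sections of total variation at most `B` (in both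
coordinates), over points of `[0,1]`. -/
def BVGraphon (f : ℝ → ℝ → ℝ) (B : ℝ) : Prop :=
  ∀ v ∈ Set.Icc (0 : ℝ) 1, ∀ (s : ℕ) (u : Fin (s + 1) → ℝ),
    Monotone u → (∀ l, u l ∈ Set.Icc (0 : ℝ) 1) →
    (∑ l : Fin s, |f (u l.castSucc) v - f (u l.succ) v|) ≤ B ∧
    (∑ l : Fin s, |f v (u l.castSucc) - f v (u l.succ)|) ≤ B

/-- Assumption 2: `d` is lower Lipschitz w.r.t. `ξ` with constant `L` and additive error `Δ`. -/
def LowerLip {n : ℕ} (ξ : Fin n → ℝ) (d : Fin n → Fin n → ℝ) (L Δ : ℝ) : Prop :=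
  ∀ i j, L * |ξ i - ξ j| - Δ ≤ d i j

/-- The `l`-th interval of a partition `0 = a 0 < a 1 < ⋯ < a m = 1` of `[0,1]`: half-open
intervals, except the last one which is closed. -/
def partInterval {m : ℕ} (a : Fin (m + 1) → ℝ) (l : Fin m) : Set ℝ :=
  if l.succ = Fin.last m then Set.Icc (a l.castSucc) (a l.succ)
  else Set.Ico (a l.castSucc) (a l.succ)

/-- Assumption 3 with an explicit partition: `d` is piecewise Lipschitz w.r.t. `ξ` with
constant `L`, additive error `Δ`, and partition points `a`. -/
def PiecewiseLipWith {n : ℕ} (ξ : Fin n → ℝ) (d : Fin n → Fin n → ℝ) (L Δ : ℝ)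
    (m : ℕ) (a : Fin (m + 1) → ℝ) : Prop :=
  a 0 = 0 ∧ a (Fin.last m) = 1 ∧ StrictMono a ∧
    ∀ i j, ∀ l : Fin m, ξ i ∈ partInterval a l → ξ j ∈ partInterval a l →
      d i j ≤ L * |ξ i - ξ j| + Δ

/-- Assumption 3: `d` is piecewise Lipschitz w.r.t. `ξ` for some partition of `[0,1]`. -/
def PiecewiseLip {n : ℕ} (ξ : Fin n → ℝ) (d : Fin n → Fin n → ℝ) (L Δ : ℝ) : Prop :=
  ∃ (m : ℕ) (a : Fin (m + 1) → ℝ), PiecewiseLipWith ξ d L Δ m a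

/-- `j` is among the `K` indices (other than `i`) with smallest values of `d i ·`. -/
def IsKNN {n : ℕ} (K : ℕ) (d : Fin n → Fin n → ℝ) (i j : Fin n) : Prop :=
  j ≠ i ∧ (Finset.univ.filter fun k => k ≠ i ∧ d i k < d i j).card < K

/-- The (symmetric) K-nearest-neighbor graph of a pairwise quantity `d`. -/
noncomputable def knnGraph (n K : ℕ) (d : Fin n → Fin n → ℝ) : SimpleGraph (Fin n) where
  Adj i j := i ≠ j ∧ (IsKNN K d i j ∨ IsKNN K d j i)
  symm := by
    constructor
    intro i j h
    exact ⟨h.1.symm, h.2.symm⟩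
  loopless := by constructor; intro i h; exact h.1 rfl

/-- The empirical distance `d̂₁²` built from the adjacency matrix `A`. -/
noncomputable def dhat1sq {n : ℕ} (A : Matrix (Fin n) (Fin n) ℝ) (i j : Fin n) : ℝ :=
  (1 / ((n : ℝ) * ((n : ℝ) - 2))) *
    ∑ k ∈ Finset.univ.filter (fun k => k ≠ i ∧ k ≠ j), |∑ l, (A l i - A l j) * A l k|

/-- The population distance `d₁²` evaluated at latent positions `x`, `y`. -/
noncomputable def d1sq (f : ℝ → ℝ → ℝ) (x y : ℝ) : ℝ :=
  ∫ u in Set.Icc (0 : ℝ) 1, |∫ v in Set.Icc (0 : ℝ) 1, (f x v - f y v) * f u v|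

/-- `X` is a Bernoulli(`p`) random variable. -/
def IsBernoulli {Ω : Type*} [MeasurableSpace Ω] (μ : Measure Ω) (X : Ω → ℝ) (p : ℝ) : Prop :=
  Measurable X ∧ (∀ ω, X ω = 0 ∨ X ω = 1) ∧ μ {ω | X ω = 1} = ENNReal.ofReal p

/-- The graphon model: `ξ i` are i.i.d. Uniform[0,1] and, conditionally on `ξ`, the entries
`A i j` are independent Bernoulli(`f (ξ i) (ξ j)`).  This is realized by auxiliary i.i.d.
Uniform[0,1] variables `U i j`, jointly independent of the `ξ`'s, with
`A i j = 1{U i j ≤ f (ξ i) (ξ j)}`. -/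
structure GraphonModel {Ω : Type*} [MeasurableSpace Ω] (μ : Measure Ω) (n : ℕ)
    (f : ℝ → ℝ → ℝ) (ξ : Fin n → Ω → ℝ) (A : Fin n → Fin n → Ω → ℝ) : Prop where
  meas_f : Measurable (Function.uncurry f)
  range_f : ∀ x ∈ Set.Icc (0 : ℝ) 1, ∀ y ∈ Set.Icc (0 : ℝ) 1, f x y ∈ Set.Icc (0 : ℝ) 1
  latent : ∃ U : Fin n → Fin n → Ω → ℝ,
    iIndepFun
      (Sum.elim ξ (fun p : Fin n × Fin n => U p.1 p.2)) μ ∧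
    (∀ i, IsUniform01 μ (ξ i)) ∧
    (∀ i j : Fin n, IsUniform01 μ (U i j)) ∧
    (∀ i j : Fin n, ∀ ω, A i j ω = if U i j ω ≤ f (ξ i ω) (ξ j ω) then 1 else 0)

end PGFL
section ClipAux

private noncomputable def clip (x : ℝ) : ℝ := min (max x 0) 1

private lemma clip_lip (x y : ℝ) : |clip x - clip y| ≤ |x - y| := by
  have h1 : |clip x - clip y| ≤ max |max x 0 - max y 0| |(1:ℝ) - 1| :=
    abs_min_sub_min_le_max _ _ _ _
  have h2 : |max x 0 - max y 0| ≤ |x - y| := abs_max_sub_max_le_abs _ _ _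
  simpa using h1.trans (by simpa using h2)

private lemma clip_close {a : ℝ} (ha : a ∈ Set.Icc (0:ℝ) 1) (p : ℝ) :
    |a - clip p| ≤ |a - p| := by
  obtain ⟨h0, h1⟩ := ha
  unfold clip
  rcases le_total p 0 with hp | hp
  · rw [max_eq_right hp, min_eq_left (by norm_num : (0:ℝ) ≤ 1),
      abs_of_nonneg (by linarith), abs_of_nonneg (by linarith)]
    linarith
  · rcases le_total p 1 with hq | hq
    · rw [max_eq_left hp, min_eq_left hq]
    · rw [max_eq_left hp, min_eq_right hq,
        abs_of_nonpos (by linarith), abs_of_nonpos (by linarith)]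
      linarith

private lemma clip_close_lt {a : ℝ} (ha : a ∈ Set.Icc (0:ℝ) 1) {p : ℝ}
    (hp : p ∉ Set.Icc (0:ℝ) 1) : |a - clip p| < |a - p| := by
  obtain ⟨h0, h1⟩ := ha
  rw [Set.mem_Icc, not_and_or, not_le, not_le] at hp
  unfold clip
  rcases hp with hp | hp
  · rw [max_eq_right hp.le, min_eq_left (by norm_num : (0:ℝ) ≤ 1),
      abs_of_nonneg (by linarith), abs_of_nonneg (by linarith)]
    linarith
  · rw [max_eq_left (by linarith), min_eq_right hp.le,
      abs_of_nonpos (by linarith), abs_of_nonpos (by linarith)]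
    linarith

private lemma sq_le_of_abs {x y : ℝ} (h : |x| ≤ |y|) : x ^ 2 ≤ y ^ 2 := by
  nlinarith [abs_nonneg x, sq_abs x, sq_abs y]

private lemma sq_lt_of_abs {x y : ℝ} (h : |x| < |y|) : x ^ 2 < y ^ 2 := by
  nlinarith [abs_nonneg x, sq_abs x, sq_abs y]

private lemma mul_clip_apply {n m : ℕ} (D : Matrix (Fin m) (Fin n) ℝ)
    (e : Fin m → Fin n × Fin n)
    (hrow : ∀ k, D k = fun j => if j = (e k).1 then 1 else if j = (e k).2 then (-1 : ℝ) else 0)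
    (hne : ∀ k, (e k).1 ≠ (e k).2)
    (P : Matrix (Fin n) (Fin n) ℝ) (k : Fin m) (j : Fin n) :
    (D * P) k j = P (e k).1 j - P (e k).2 j := by
  have : (D * P) k j = ∑ i, D k i * P i j := Matrix.mul_apply
  rw [this]
  have hsum : ∀ i : Fin n, D k i * P i j =
      (if i = (e k).1 then P i j else 0) + (if i = (e k).2 then -P i j else 0) := by
    intro i
    rw [hrow k]
    by_cases h1 : i = (e k).1
    · subst h1; simp [hne k]
    · by_cases h2 : i = (e k).2
      · subst h2; simp [Ne.symm (hne k)]
      · simp [h1, h2]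
  rw [Finset.sum_congr rfl fun i _ => hsum i, Finset.sum_add_distrib]
  simp [sub_eq_add_neg]

private lemma l1_mul_clip_le {n m : ℕ} (D : Matrix (Fin m) (Fin n) ℝ)
    (e : Fin m → Fin n × Fin n)
    (hrow : ∀ k, D k = fun j => if j = (e k).1 then 1 else if j = (e k).2 then (-1 : ℝ) else 0)
    (hne : ∀ k, (e k).1 ≠ (e k).2)
    (P : Matrix (Fin n) (Fin n) ℝ) :
    PGFL.l1 (D * (Matrix.of fun i j => clip (P i j))) ≤ PGFL.l1 (D * P) := by
  unfold PGFL.l1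
  refine Finset.sum_le_sum fun k _ => Finset.sum_le_sum fun j _ => ?_
  rw [mul_clip_apply D e hrow hne, mul_clip_apply D e hrow hne]
  exact clip_lip _ _

end ClipAux

/-- Clipping lemma for the PGFL. -/
theorem stmt_5 {n m : ℕ} (G : SimpleGraph (Fin n)) (D : Matrix (Fin m) (Fin n) ℝ)
    (hD : PGFL.IsIncidence G D) (A : Matrix (Fin n) (Fin n) ℝ)
    (hA : ∀ i j, A i j ∈ Set.Icc (0 : ℝ) 1) (lam : ℝ) (hlam : 0 ≤ lam) :
    (∀ P : Matrix (Fin n) (Fin n) ℝ,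
      PGFL.pgflObj D A lam (Matrix.of fun i j => min (max (P i j) 0) 1)
        ≤ PGFL.pgflObj D A lam P) ∧
    (∀ P : Matrix (Fin n) (Fin n) ℝ, (∃ i j, P i j ∉ Set.Icc (0 : ℝ) 1) →
      PGFL.pgflObj D A lam (Matrix.of fun i j => min (max (P i j) 0) 1)
        < PGFL.pgflObj D A lam P) ∧
    (∀ Phat : Matrix (Fin n) (Fin n) ℝ, PGFL.IsPGFL D A lam Phat →
      ∀ i j, Phat i j ∈ Set.Icc (0 : ℝ) 1) := by

  obtain ⟨e, hadj, _, hrow⟩ := hD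
  have hne : ∀ k, (e k).1 ≠ (e k).2 := fun k => (hadj k).ne
  set cl : Matrix (Fin n) (Fin n) ℝ → Matrix (Fin n) (Fin n) ℝ :=
    fun P => Matrix.of fun i j => min (max (P i j) 0) 1 with hcl
  have hclip : ∀ P : Matrix (Fin n) (Fin n) ℝ,
      cl P = Matrix.of fun i j => clip (P i j) := fun P => rfl
  -- transpose of clipped = clipped of transpose
  have htr : ∀ P : Matrix (Fin n) (Fin n) ℝ, (cl P)ᵀ = cl Pᵀ := by
    intro P; ext i j; rfl
  have hl1 : ∀ P : Matrix (Fin n) (Fin n) ℝ,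
      PGFL.l1 (D * cl P) + PGFL.l1 (D * (cl P)ᵀ)
        ≤ PGFL.l1 (D * P) + PGFL.l1 (D * Pᵀ) := by
    intro P
    rw [htr, hclip, hclip]
    exact add_le_add (l1_mul_clip_le D e hrow hne P) (l1_mul_clip_le D e hrow hne Pᵀ)
  have hfrob_term : ∀ (P : Matrix (Fin n) (Fin n) ℝ) (i j : Fin n),
      (A i j - (cl P) i j) ^ 2 ≤ (A i j - P i j) ^ 2 := by
    intro P i j
    exact sq_le_of_abs (clip_close (hA i j) (P i j))
  have hfrob : ∀ P : Matrix (Fin n) (Fin n) ℝ,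
      PGFL.frobSq (A - cl P) ≤ PGFL.frobSq (A - P) := by
    intro P
    unfold PGFL.frobSq
    refine Finset.sum_le_sum fun i _ => Finset.sum_le_sum fun j _ => ?_
    simpa [Matrix.sub_apply] using hfrob_term P i j
  have hle : ∀ P : Matrix (Fin n) (Fin n) ℝ,
      PGFL.pgflObj D A lam (cl P) ≤ PGFL.pgflObj D A lam P := by
    intro P
    unfold PGFL.pgflObj
    exact add_le_add (hfrob P) (mul_le_mul_of_nonneg_left (hl1 P) hlam)
  have hlt : ∀ P : Matrix (Fin n) (Fin n) ℝ, (∃ i j, P i j ∉ Set.Icc (0 : ℝ) 1) →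
      PGFL.pgflObj D A lam (cl P) < PGFL.pgflObj D A lam P := by
    intro P ⟨i0, j0, hout⟩
    have hfrob_lt : PGFL.frobSq (A - cl P) < PGFL.frobSq (A - P) := by
      unfold PGFL.frobSq
      refine Finset.sum_lt_sum (fun i _ => Finset.sum_le_sum fun j _ => by
        simpa [Matrix.sub_apply] using hfrob_term P i j) ⟨i0, Finset.mem_univ _, ?_⟩
      refine Finset.sum_lt_sum (fun j _ => by
        simpa [Matrix.sub_apply] using hfrob_term P i0 j) ⟨j0, Finset.mem_univ _, ?_⟩
      simp only [Matrix.sub_apply]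
      exact sq_lt_of_abs (clip_close_lt (hA i0 j0) hout)
    unfold PGFL.pgflObj
    exact add_lt_add_of_lt_of_le hfrob_lt (mul_le_mul_of_nonneg_left (hl1 P) hlam)
  refine ⟨hle, hlt, fun Phat hmin i j => ?_⟩
  by_contra hout
  exact absurd (hmin (cl Phat) |>.trans_lt (hlt Phat ⟨i, j, hout⟩)) (lt_irrefl _)
end

section
/- Neighborhood-count lemma for i.i.d. uniforms: let n ≥ 2, let ξ₁,...,ξ_n be i.i.d. Uniform[0,1] random variables, and let δ ∈ (0,1]. Then the probability that the number of indices j ∈ {2,...,n} with |ξ_j − ξ_1| ≤ δ is at most δn/4 is bounded by exp(−nδ/24). -/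
open MeasureTheory ProbabilityTheory Matrix

lemma lintegral_prod_of_indep {Ω ι : Type*} [MeasurableSpace Ω] {μ : Measure Ω}
    [IsProbabilityMeasure μ] {F : ι → Ω → ENNReal}
    (h : iIndepFun F μ) (hm : ∀ i, Measurable (F i))
    (s : Finset ι) :
    ∫⁻ ω, ∏ i ∈ s, F i ω ∂μ = ∏ i ∈ s, ∫⁻ ω, F i ω ∂μ := by
  classical
  induction s using Finset.cons_induction with
  | empty => simp
  | cons i s hi ih =>
    have hind : IndepFun (∏ j ∈ s, F j) (F i) μ :=
      h.indepFun_finsetProd_of_notMem hm hi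
    simp only [Finset.prod_cons]
    rw [← ih]
    have : ∫⁻ ω, F i ω * ∏ j ∈ s, F j ω ∂μ
        = (∫⁻ ω, F i ω ∂μ) * ∫⁻ ω, ∏ j ∈ s, F j ω ∂μ := by
      have := lintegral_mul_eq_lintegral_mul_lintegral_of_indepFun''
        (μ := μ) (f := fun ω => ∏ j ∈ s, F j ω) (g := F i)
        ((Finset.measurable_prod s fun j _ => hm j).aemeasurable) (hm i).aemeasurable ?_
      · simp_rw [mul_comm] at this ⊢; exact this
      · have : (∏ j ∈ s, F j) = fun ω => ∏ j ∈ s, F j ω := by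
          funext ω; simp [Finset.prod_apply]
        rwa [this] at hind
    exact this

/-- Neighborhood-count lemma for i.i.d. uniforms. -/
theorem stmt_6 {Ω : Type*} [MeasurableSpace Ω] (μ : MeasureTheory.Measure Ω)
    [MeasureTheory.IsProbabilityMeasure μ]
    (n : ℕ) (hn : 2 ≤ n) (ξ : Fin n → Ω → ℝ)
    (hindep : ProbabilityTheory.iIndepFun ξ μ)
    (hunif : ∀ i, PGFL.IsUniform01 μ (ξ i))
    (δ : ℝ) (hδ : δ ∈ Set.Ioc (0 : ℝ) 1) :
    μ {ω | ((Finset.univ.filter fun j : Fin n =>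
        j ≠ (⟨0, by omega⟩ : Fin n) ∧ |ξ j ω - ξ (⟨0, by omega⟩ : Fin n) ω| ≤ δ).card : ℝ)
        ≤ δ * n / 4}
      ≤ ENNReal.ofReal (Real.exp (-((n : ℝ) * δ) / 24)) := by
  classical
  obtain ⟨hδ0, hδ1⟩ := hδ
  have hnR : (2 : ℝ) ≤ (n : ℝ) := by exact_mod_cast hn
  set i0 : Fin n := ⟨0, by omega⟩ with hi0
  have hmeas : ∀ i, Measurable (ξ i) := fun i => (hunif i).1
  set c' : ENNReal := ENNReal.ofReal (Real.exp (-1)) with hc'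
  set t : Finset (Fin n) := Finset.univ.filter (· ≠ i0) with ht
  set T : Ω → ENNReal :=
    fun ω => ∏ j ∈ t, (if |ξ j ω - ξ i0 ω| ≤ δ then c' else 1) with hTdef
  have hTmeas : Measurable T := by
    apply Finset.measurable_prod
    intro j _
    exact Measurable.ite
      (measurableSet_le ((hmeas j).sub (hmeas i0)).abs measurable_const)
      measurable_const measurable_const
  -- event inclusion
  set a : ℝ := δ * n / 4 with ha
  have hsub : {ω | ((Finset.univ.filter fun j : Fin n =>
        j ≠ i0 ∧ |ξ j ω - ξ i0 ω| ≤ δ).card : ℝ) ≤ a}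
      ⊆ {ω | ENNReal.ofReal (Real.exp (-a)) ≤ T ω} := by
    intro ω hω
    simp only [Set.mem_setOf_eq] at hω ⊢
    set k := (Finset.univ.filter fun j : Fin n =>
        j ≠ i0 ∧ |ξ j ω - ξ i0 ω| ≤ δ).card with hk
    have hTe : T ω = c' ^ k := by
      show (∏ j ∈ t, (if |ξ j ω - ξ i0 ω| ≤ δ then c' else 1)) = c' ^ k
      rw [Finset.prod_ite, Finset.prod_const, Finset.prod_const, one_pow, mul_one]
      congr 1
      rw [hk, ht, Finset.filter_filter]
    rw [hTe, hc', ← ENNReal.ofReal_pow (Real.exp_nonneg _), ← Real.exp_nat_mul]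
    apply ENNReal.ofReal_le_ofReal
    apply Real.exp_le_exp.2
    nlinarith [hω]
  -- single integral bound
  set c : ℝ := 1 - Real.exp (-1) with hcdef
  have hexp1 : Real.exp (-1) ≤ 5 / 12 := by
    rw [Real.exp_neg, inv_le_comm₀ (Real.exp_pos 1) (by norm_num)]
    exact le_trans (by norm_num) Real.exp_one_gt_d9.le
  have hc0 : 0 ≤ c := by
    have := Real.exp_nonneg (-1); simp only [hcdef]; linarith
  set r : ENNReal := ENNReal.ofReal (1 - c * δ) with hrdef
  set g : ℝ → ℝ → ENNReal := fun y x => if |y - x| ≤ δ then c' else 1 with hgdef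
  have hsingle : ∀ x ∈ Set.Icc (0 : ℝ) 1,
      (∫⁻ y in Set.Icc (0 : ℝ) 1, g y x ∂volume) ≤ r := by
    intro x hx
    set L : ℝ := min 1 (x + δ) - max 0 (x - δ) with hL
    have hLδ : δ ≤ L ∧ L ≤ 1 := by
      constructor <;> rw [hL, min_def, max_def] <;> split_ifs <;>
        first | linarith [hx.1, hx.2] | linarith [hx.1, hx.2, hδ0, hδ1]
    have hA : ∀ y, (|y - x| ≤ δ) ↔ y ∈ Set.Icc (x - δ) (x + δ) := by
      intro y
      rw [abs_sub_le_iff, Set.mem_Icc]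
      constructor <;> intro h <;> constructor <;> linarith [h.1, h.2]
    set I : Set ℝ := Set.Icc (0 : ℝ) 1 with hI
    set A : Set ℝ := Set.Icc (x - δ) (x + δ) with hAdef
    have hIA : I ∩ A = Set.Icc (max 0 (x - δ)) (min 1 (x + δ)) := Set.Icc_inter_Icc
    have hvolIA : volume (I ∩ A) = ENNReal.ofReal L := by
      rw [hIA, Real.volume_Icc]
    have hvolI : volume I = 1 := by
      rw [hI, Real.volume_Icc]; norm_num
    have hvoldiff : volume (I \ A) = ENNReal.ofReal (1 - L) := by
      have h1 : I \ A = I \ (I ∩ A) := by rw [Set.diff_self_inter]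
      rw [h1, measure_diff Set.inter_subset_left
        (measurableSet_Icc.inter measurableSet_Icc).nullMeasurableSet
        (by rw [hvolIA]; exact ENNReal.ofReal_ne_top),
        hvolIA, hvolI]
      rw [← ENNReal.ofReal_one, ← ENNReal.ofReal_sub _ (by linarith [hLδ.1] : (0:ℝ) ≤ L)]
    -- split the integral
    have hsplit : (∫⁻ y in I, g y x ∂volume)
        = (∫⁻ y in I ∩ A, g y x ∂volume) + ∫⁻ y in I \ A, g y x ∂volume := by
      rw [← lintegral_inter_add_diff (fun y => g y x) I
        (measurableSet_Icc : MeasurableSet A)]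
    rw [hsplit]
    have h1 : (∫⁻ y in I ∩ A, g y x ∂volume) = c' * ENNReal.ofReal L := by
      rw [setLIntegral_congr_fun (measurableSet_Icc.inter measurableSet_Icc)
        (fun y hy => ?_), setLIntegral_const, hvolIA]
      show g y x = c'
      rw [hgdef]
      simp only [if_pos ((hA y).2 hy.2)]
    have h2 : (∫⁻ y in I \ A, g y x ∂volume) = ENNReal.ofReal (1 - L) := by
      rw [setLIntegral_congr_fun (measurableSet_Icc.diff measurableSet_Icc)
        (fun y hy => ?_), setLIntegral_const, hvoldiff, one_mul]
      show g y x = 1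
      rw [hgdef]
      simp only [if_neg (fun h => hy.2 ((hA y).1 h))]
    rw [h1, h2, hc', ← ENNReal.ofReal_mul (Real.exp_nonneg _),
      ← ENNReal.ofReal_add (by nlinarith [Real.exp_nonneg (-1), hLδ.1] : (0:ℝ) ≤ Real.exp (-1) * L)
        (by linarith [hLδ.2] : (0:ℝ) ≤ 1 - L), hrdef]
    apply ENNReal.ofReal_le_ofReal
    nlinarith [hLδ.1, hLδ.2, hexp1, Real.exp_nonneg (-1)]
  -- factorization of ∫⁻ T
  set Y : Ω → ({j // j ∈ t} → ℝ) := fun ω j => ξ j.1 ω with hYdef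
  have hYmeas : Measurable Y := measurable_pi_lambda _ (fun j => hmeas j.1)
  haveI : IsProbabilityMeasure (μ.map Y) := Measure.isProbabilityMeasure_map hYmeas.aemeasurable
  haveI : IsProbabilityMeasure (μ.map (ξ i0)) :=
    Measure.isProbabilityMeasure_map (hmeas i0).aemeasurable
  have hdisj : Disjoint ({i0} : Finset (Fin n)) t := by
    rw [Finset.disjoint_left]
    intro i hi hit
    rw [Finset.mem_singleton] at hi
    rw [ht, Finset.mem_filter] at hit
    exact hit.2 hi
  have hXY : IndepFun (ξ i0) Y μ := by
    have h1 := hindep.indepFun_finset {i0} t hdisj hmeas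
    have h2 := h1.comp (ψ := id)
      (measurable_pi_apply (⟨i0, Finset.mem_singleton_self i0⟩ : ({i0} : Finset (Fin n))))
      measurable_id
    exact h2
  have hmap : μ.map (fun ω => (ξ i0 ω, Y ω)) = (μ.map (ξ i0)).prod (μ.map Y) :=
    (indepFun_iff_map_prod_eq_prod_map_map (hmeas i0).aemeasurable hYmeas.aemeasurable).1 hXY
  set H : ℝ × ({j // j ∈ t} → ℝ) → ENNReal := fun p => ∏ j ∈ t.attach, g (p.2 j) p.1
    with hHdef
  have hHmeas : Measurable H := by
    apply Finset.measurable_prod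
    intro j _
    apply Measurable.ite _ measurable_const measurable_const
    exact measurableSet_le (by fun_prop) measurable_const
  have hTH : ∀ ω, T ω = H (ξ i0 ω, Y ω) := by
    intro ω
    show (∏ j ∈ t, (if |ξ j ω - ξ i0 ω| ≤ δ then c' else 1))
      = ∏ j ∈ t.attach, (if |ξ j.1 ω - ξ i0 ω| ≤ δ then c' else 1)
    rw [← Finset.prod_attach t (fun j => if |ξ j ω - ξ i0 ω| ≤ δ then c' else 1)]
  have key : (∫⁻ ω, T ω ∂μ) ≤ r ^ t.card := by
    calc (∫⁻ ω, T ω ∂μ) = ∫⁻ ω, H (ξ i0 ω, Y ω) ∂μ := lintegral_congr hTH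
      _ = ∫⁻ p, H p ∂(μ.map (fun ω => (ξ i0 ω, Y ω))) :=
          (lintegral_map hHmeas ((hmeas i0).prodMk hYmeas)).symm
      _ = ∫⁻ p, H p ∂((μ.map (ξ i0)).prod (μ.map Y)) := by rw [hmap]
      _ = ∫⁻ x, ∫⁻ v, H (x, v) ∂(μ.map Y) ∂(μ.map (ξ i0)) :=
          lintegral_prod _ hHmeas.aemeasurable
      _ ≤ r ^ t.card := by
          rw [(hunif i0).2]
          have hbd : ∀ x ∈ Set.Icc (0 : ℝ) 1,
              (∫⁻ v, H (x, v) ∂(μ.map Y)) ≤ r ^ t.card := by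
            intro x hx
            have e1 : (∫⁻ v, H (x, v) ∂(μ.map Y)) = ∫⁻ ω, H (x, Y ω) ∂μ :=
              lintegral_map (hHmeas.comp (measurable_prodMk_left)) hYmeas
            have e2 : ∀ ω, H (x, Y ω) = ∏ j ∈ t, ((fun y => g y x) ∘ ξ j) ω := by
              intro ω
              show (∏ j ∈ t.attach, g (ξ j.1 ω) x) = ∏ j ∈ t, g (ξ j ω) x
              exact Finset.prod_attach t (fun j => g (ξ j ω) x)
            have hcm : Measurable (fun y : ℝ => g y x) := by
              apply Measurable.ite _ measurable_const measurable_const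
              exact measurableSet_le ((measurable_id.sub measurable_const).abs)
                measurable_const
            have e3 : (∫⁻ ω, H (x, Y ω) ∂μ)
                = ∏ j ∈ t, ∫⁻ ω, ((fun y => g y x) ∘ ξ j) ω ∂μ := by
              rw [lintegral_congr e2]
              exact lintegral_prod_of_indep
                (hindep.comp (fun _ => fun y => g y x) (fun _ => hcm))
                (fun i => hcm.comp (hmeas i)) t
            have e4 : ∀ j ∈ t, (∫⁻ ω, ((fun y => g y x) ∘ ξ j) ω ∂μ) ≤ r := by
              intro j _
              have : (∫⁻ ω, ((fun y => g y x) ∘ ξ j) ω ∂μ)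
                  = ∫⁻ y in Set.Icc (0 : ℝ) 1, g y x ∂volume := by
                rw [← (hunif j).2]
                exact (lintegral_map hcm (hmeas j)).symm
              rw [this]
              exact hsingle x hx
            rw [e1, e3]
            calc (∏ j ∈ t, ∫⁻ ω, ((fun y => g y x) ∘ ξ j) ω ∂μ)
                ≤ ∏ _j ∈ t, r := Finset.prod_le_prod' e4
              _ = r ^ t.card := Finset.prod_const r
          calc (∫⁻ x in Set.Icc (0:ℝ) 1, ∫⁻ v, H (x, v) ∂(μ.map Y) ∂volume)
              ≤ ∫⁻ _x in Set.Icc (0:ℝ) 1, r ^ t.card ∂volume :=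
                setLIntegral_mono measurable_const hbd
            _ = r ^ t.card := by
                rw [setLIntegral_const, Real.volume_Icc]; norm_num
  -- cardinality of t
  have htcard : (t.card : ℝ) = (n : ℝ) - 1 := by
    have : t.card = n - 1 := by
      rw [ht, Finset.filter_ne', Finset.card_erase_of_mem (Finset.mem_univ _),
        Finset.card_univ, Fintype.card_fin]
    rw [this, Nat.cast_sub (by omega)]
    norm_num
  have hrexp : r ≤ ENNReal.ofReal (Real.exp (-(c * δ))) := by
    apply ENNReal.ofReal_le_ofReal
    have := Real.add_one_le_exp (-(c * δ))
    linarith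
  have key2 : (∫⁻ ω, T ω ∂μ) ≤ ENNReal.ofReal (Real.exp ((t.card : ℝ) * (-(c * δ)))) := by
    calc (∫⁻ ω, T ω ∂μ) ≤ r ^ t.card := key
      _ ≤ (ENNReal.ofReal (Real.exp (-(c * δ)))) ^ t.card := pow_le_pow_left' hrexp _
      _ = ENNReal.ofReal (Real.exp (-(c * δ)) ^ t.card) :=
          (ENNReal.ofReal_pow (Real.exp_nonneg _) _).symm
      _ = ENNReal.ofReal (Real.exp ((t.card : ℝ) * (-(c * δ)))) := by
          rw [← Real.exp_nat_mul]
  set Ev : Set Ω := {ω | ((Finset.univ.filter fun j : Fin n =>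
      j ≠ i0 ∧ |ξ j ω - ξ i0 ω| ≤ δ).card : ℝ) ≤ a} with hEv
  have hmark : ENNReal.ofReal (Real.exp (-a)) * μ Ev
      ≤ ENNReal.ofReal (Real.exp ((t.card : ℝ) * (-(c * δ)))) :=
    le_trans (mul_le_mul_right (measure_mono hsub) _)
      (le_trans (mul_meas_ge_le_lintegral₀ (μ := μ) hTmeas.aemeasurable _) key2)
  have final : μ Ev ≤ ENNReal.ofReal (Real.exp (-((n : ℝ) * δ) / 24)) := by
    calc μ Ev = ENNReal.ofReal (Real.exp a) * (ENNReal.ofReal (Real.exp (-a)) * μ Ev) := by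
          rw [← mul_assoc, ← ENNReal.ofReal_mul (Real.exp_nonneg _), ← Real.exp_add,
            add_neg_cancel, Real.exp_zero, ENNReal.ofReal_one, one_mul]
      _ ≤ ENNReal.ofReal (Real.exp a)
          * ENNReal.ofReal (Real.exp ((t.card : ℝ) * (-(c * δ)))) := mul_le_mul_right hmark _
      _ = ENNReal.ofReal (Real.exp (a + (t.card : ℝ) * (-(c * δ)))) := by
          rw [← ENNReal.ofReal_mul (Real.exp_nonneg _), ← Real.exp_add]
      _ ≤ ENNReal.ofReal (Real.exp (-((n : ℝ) * δ) / 24)) := by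
          apply ENNReal.ofReal_le_ofReal
          apply Real.exp_le_exp.2
          rw [htcard, ha]
          have hc712 : 7 / 12 ≤ c := by rw [hcdef]; linarith
          have hn1 : (n : ℝ) / 2 ≤ (n : ℝ) - 1 := by linarith
          nlinarith [mul_nonneg (mul_nonneg (by linarith : (0:ℝ) ≤ (n:ℝ) - 1)
              (by linarith : (0:ℝ) ≤ c - 7/12)) hδ0.le,
            mul_nonneg (mul_nonneg (by linarith : (0:ℝ) ≤ (n:ℝ) - 1 - (n:ℝ)/2)
              (by norm_num : (0:ℝ) ≤ 7/12)) hδ0.le]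
  exact final
end

section
/- Inner-product decomposition inequality over a connected graph: let G be a connected graph on N vertices with edge incidence matrix D ∈ ℝ^{m×N}, and let a, b ∈ ℝ^N. Then there exists v ∈ ℝ^m with Dᵀv = a − ā·1, where ā = (Σ_i a_i)/N and 1 is the all-ones vector; and for every such v, |⟨a, b⟩| ≤ (|Σ_i a_i|/√N)·‖b‖₂ + ‖v‖_∞·‖Db‖₁. -/
open MeasureTheory ProbabilityTheory Matrix

section Stmt12Aux

open Matrix

/-- Along each edge row, `D.mulVec β` computes the difference of endpoint values. -/
lemma stmt12_row_eval {N : ℕ} (p q : Fin N) (hpq : p ≠ q) (β : Fin N → ℝ) :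
    (∑ j, (if j = p then (1 : ℝ) else if j = q then -1 else 0) * β j) = β p - β q := by
  have h : ∀ j, (if j = p then (1 : ℝ) else if j = q then -1 else 0) * β j
      = (if p = j then β j else 0) + (if q = j then -β j else 0) := by
    intro j
    by_cases h1 : j = p
    · subst h1
      simp [hpq.symm, (Ne.symm hpq)]
    · by_cases h2 : j = q
      · subst h2
        simp [Ne.symm h1, h1]
      · simp [h1, h2, Ne.symm h1, Ne.symm h2]
  rw [Finset.sum_congr rfl (fun j _ => h j), Finset.sum_add_distrib,
    Finset.sum_ite_eq Finset.univ p (fun j => β j),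
    Finset.sum_ite_eq Finset.univ q (fun j => -β j)]
  simp [sub_eq_add_neg]

/-- If `D.mulVec β = 0` then `β` is constant (connectivity). -/
lemma stmt12_ker_const {N m : ℕ} (G : SimpleGraph (Fin N)) (hG : G.Connected)
    (D : Matrix (Fin m) (Fin N) ℝ) (hD : PGFL.IsIncidence G D) (β : Fin N → ℝ)
    (hβ : D.mulVec β = 0) : ∀ i j, β i = β j := by
  obtain ⟨e, hadj, huniq, hrow⟩ := hD
  have hedge : ∀ k, β (e k).1 = β (e k).2 := by
    intro k
    have h0 : D.mulVec β k = 0 := by rw [hβ]; rfl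
    have hne : (e k).1 ≠ (e k).2 := (hadj k).ne
    have hcalc : D.mulVec β k = β (e k).1 - β (e k).2 := by
      simp only [Matrix.mulVec, dotProduct, hrow k]
      exact stmt12_row_eval _ _ hne β
    rw [hcalc] at h0
    linarith
  have hadjβ : ∀ i j, G.Adj i j → β i = β j := by
    intro i j h
    obtain ⟨k, hk, -⟩ := huniq i j h
    rcases hk with hk | hk
    · have := hedge k
      rw [hk] at this
      exact this
    · have := hedge k
      rw [hk] at this
      exact this.symm
  intro i j
  obtain ⟨w⟩ := hG.preconnected i j
  induction w with
  | nil => rfl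
  | cons h p ih => exact (hadjβ _ _ h).trans ih

/-- Range of the adjoint is the orthogonal complement of the kernel. -/
lemma stmt12_range_adjoint {N m : ℕ} (T : EuclideanSpace ℝ (Fin N) →ₗ[ℝ] EuclideanSpace ℝ (Fin m)) :
    LinearMap.range (LinearMap.adjoint T) = (LinearMap.ker T)ᗮ := by
  have h1 : (LinearMap.range (LinearMap.adjoint T))ᗮ = LinearMap.ker T := by
    ext β
    simp only [Submodule.mem_orthogonal, LinearMap.mem_ker, LinearMap.mem_range]
    constructor
    · intro h
      have h2 : (inner ℝ (T β) (T β) : ℝ) = 0 := by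
        have := h (LinearMap.adjoint T (T β)) ⟨T β, rfl⟩
        rwa [LinearMap.adjoint_inner_left] at this
      exact inner_self_eq_zero.mp h2
    · rintro h u ⟨x, rfl⟩
      rw [LinearMap.adjoint_inner_left, h, inner_zero_right]
  rw [← h1, Submodule.orthogonal_orthogonal]

end Stmt12Aux

/-- Inner-product decomposition inequality over a connected graph. -/
theorem stmt_12 {N m : ℕ} (G : SimpleGraph (Fin N)) (hG : G.Connected)
    (D : Matrix (Fin m) (Fin N) ℝ) (hD : PGFL.IsIncidence G D) (a b : Fin N → ℝ) :
    (∃ v : Fin m → ℝ, Dᵀ.mulVec v = fun i => a i - (∑ k, a k) / (N : ℝ)) ∧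
    (∀ v : Fin m → ℝ, (Dᵀ.mulVec v = fun i => a i - (∑ k, a k) / (N : ℝ)) →
      ∀ c : ℝ, (∀ e, |v e| ≤ c) →
        |∑ i, a i * b i| ≤ |∑ i, a i| / Real.sqrt (N : ℝ) * PGFL.vecL2 b
          + c * ∑ e, |D.mulVec b e|) := by
  have hNe : Nonempty (Fin N) := hG.nonempty
  have hN0 : 0 < N := by obtain ⟨i⟩ := hNe; exact i.pos
  have hNR : (0 : ℝ) < N := by exact_mod_cast hN0
  set s : ℝ := ∑ k, a k with hs
  set w : EuclideanSpace ℝ (Fin N) := WithLp.toLp 2 (fun i => a i - s / (N : ℝ)) with hw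
  constructor
  · -- existence
    set T : EuclideanSpace ℝ (Fin N) →ₗ[ℝ] EuclideanSpace ℝ (Fin m) := Matrix.toEuclideanLin D
      with hT
    have hadjT : Matrix.toEuclideanLin Dᵀ = LinearMap.adjoint T := by
      have hDt : Dᵀ = Dᴴ := by
        ext i j
        simp [Matrix.conjTranspose_apply]
      rw [hDt, hT, Matrix.toEuclideanLin_conjTranspose_eq_adjoint]
    have hmem : w ∈ (LinearMap.ker T)ᗮ := by
      rw [Submodule.mem_orthogonal]
      intro β hβ
      have hβ0 : D.mulVec (WithLp.ofLp β) = 0 := by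
        rw [LinearMap.mem_ker, hT, Matrix.toEuclideanLin_apply] at hβ
        simpa using congrArg WithLp.ofLp hβ
      have hconst := stmt12_ker_const G hG D hD (WithLp.ofLp β) hβ0
      obtain ⟨i0⟩ := hNe
      have hinner : (inner ℝ β w : ℝ) = ∑ i, β i * w i := by
        simp [PiLp.inner_apply, RCLike.inner_apply, conj_trivial, mul_comm]
      rw [hinner]
      have : ∑ i, β i * w i = β i0 * ∑ i, w i := by
        rw [Finset.mul_sum]
        exact Finset.sum_congr rfl fun i _ => by rw [hconst i i0]
      rw [this]
      have hsum : ∑ i, w i = 0 := by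
        simp only [hw, PiLp.toLp_apply]
        rw [Finset.sum_sub_distrib, Finset.sum_const, Finset.card_univ, Fintype.card_fin,
          nsmul_eq_mul]
        rw [mul_div_cancel₀ _ (ne_of_gt hNR)]
        simp [hs]
      rw [hsum, mul_zero]
    rw [← stmt12_range_adjoint T, ← hadjT] at hmem
    obtain ⟨v, hv⟩ := hmem
    rw [Matrix.toEuclideanLin_apply] at hv
    exact ⟨WithLp.ofLp v, congrArg WithLp.ofLp hv⟩
  · -- the inequality
    intro v hv c hc
    have key : ∑ i, a i * b i = (s / N) * ∑ i, b i + ∑ e, v e * (D.mulVec b e) := by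
      have h1 : ∀ i, a i = s / N + (Dᵀ.mulVec v) i := by
        intro i
        have := congrFun hv i
        rw [this]
        ring
      have h2 : ∑ i, a i * b i = (s / N) * ∑ i, b i + ∑ i, (Dᵀ.mulVec v) i * b i := by
        rw [Finset.mul_sum, ← Finset.sum_add_distrib]
        exact Finset.sum_congr rfl fun i _ => by rw [h1 i]; ring
      have h3 : ∑ i, (Dᵀ.mulVec v) i * b i = ∑ e, v e * (D.mulVec b e) := by
        have : (Dᵀ.mulVec v) ⬝ᵥ b = v ⬝ᵥ (D.mulVec b) := by
          rw [Matrix.mulVec_transpose, ← Matrix.dotProduct_mulVec]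
        simpa [dotProduct] using this
      rw [h2, h3]
    have hsqrtN : Real.sqrt N * Real.sqrt N = N := Real.mul_self_sqrt hNR.le
    have hsqrtNpos : 0 < Real.sqrt N := Real.sqrt_pos.mpr hNR
    -- Cauchy-Schwarz : |∑ b| ≤ √N * vecL2 b
    have hCS : |∑ i, b i| ≤ Real.sqrt N * PGFL.vecL2 b := by
      have h := Finset.sum_mul_sq_le_sq_mul_sq Finset.univ (fun _ => (1 : ℝ)) b
      simp only [one_mul, one_pow, Finset.sum_const, Finset.card_univ, Fintype.card_fin,
        nsmul_eq_mul, mul_one] at h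
      have h2 : |∑ i, b i| = Real.sqrt ((∑ i, b i) ^ 2) := (Real.sqrt_sq_eq_abs _).symm
      rw [h2, PGFL.vecL2, ← Real.sqrt_mul hNR.le]
      exact Real.sqrt_le_sqrt h
    calc |∑ i, a i * b i|
        ≤ |s / N * ∑ i, b i| + |∑ e, v e * (D.mulVec b e)| := by
          rw [key]; exact abs_add_le _ _
      _ ≤ |s| / N * (Real.sqrt N * PGFL.vecL2 b) + ∑ e, |v e| * |D.mulVec b e| := by
          apply add_le_add
          · rw [abs_mul, abs_div, abs_of_pos hNR]
            exact mul_le_mul_of_nonneg_left hCS (by positivity)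
          · calc |∑ e, v e * (D.mulVec b e)| ≤ ∑ e, |v e * (D.mulVec b e)| :=
                Finset.abs_sum_le_sum_abs _ _
              _ = ∑ e, |v e| * |D.mulVec b e| := by
                exact Finset.sum_congr rfl fun e _ => abs_mul _ _
      _ ≤ |s| / Real.sqrt N * PGFL.vecL2 b + c * ∑ e, |D.mulVec b e| := by
          apply add_le_add
          · have h4 : |s| / (N : ℝ) * Real.sqrt N = |s| / Real.sqrt N := by
              rw [eq_div_iff (ne_of_gt hsqrtNpos), mul_assoc, hsqrtN,
                div_mul_cancel₀ _ (ne_of_gt hNR)]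
            rw [← mul_assoc, h4]
          · rw [Finset.mul_sum]
            exact Finset.sum_le_sum fun e _ =>
              mul_le_mul_of_nonneg_right (hc e) (abs_nonneg _)
end

section
/- Duality for the graph fused lasso: let ∇ ∈ ℝ^{m×n} be the edge incidence matrix of a graph G on {1,...,n}, let y ∈ ℝⁿ and λ > 0. If û minimizes u ↦ (1/2)‖∇ᵀu‖₂² − uᵀ∇y over the box {u ∈ ℝ^m : ‖u‖_∞ ≤ λ/2}, then β̂ := y − ∇ᵀû minimizes β ↦ ‖y − β‖₂² + λ‖∇β‖₁ over β ∈ ℝⁿ. -/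
open MeasureTheory ProbabilityTheory Matrix

/-- Duality for the graph fused lasso. -/
theorem stmt_13 {n m : ℕ} (G : SimpleGraph (Fin n)) (D : Matrix (Fin m) (Fin n) ℝ)
    (hD : PGFL.IsIncidence G D) (y : Fin n → ℝ) (lam : ℝ) (hlam : 0 < lam)
    (uhat : Fin m → ℝ) (hbox : ∀ e, |uhat e| ≤ lam / 2)
    (hmin : ∀ u : Fin m → ℝ, (∀ e, |u e| ≤ lam / 2) →
      (1 / 2) * (∑ j, (Matrix.vecMul uhat D j) ^ 2) - ∑ e, uhat e * D.mulVec y e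
        ≤ (1 / 2) * (∑ j, (Matrix.vecMul u D j) ^ 2) - ∑ e, u e * D.mulVec y e) :
    ∀ β : Fin n → ℝ,
      (∑ i, (y i - (y i - Matrix.vecMul uhat D i)) ^ 2)
          + lam * ∑ e, |D.mulVec (fun i => y i - Matrix.vecMul uhat D i) e|
        ≤ (∑ i, (y i - β i) ^ 2) + lam * ∑ e, |D.mulVec β e| := by
  classical
  intro β
  set v : Fin n → ℝ := Matrix.vecMul uhat D with hv
  set bhat : Fin n → ℝ := fun i => y i - v i with hbhat
  set r : Fin m → ℝ := D.mulVec bhat with hrdef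
  have hvec : ∀ (u : Fin m → ℝ) (j : Fin n), Matrix.vecMul u D j = ∑ e, u e * D e j := by
    intro u j; simp [Matrix.vecMul, dotProduct]
  have hmulv : ∀ (x : Fin n → ℝ) (e : Fin m), D.mulVec x e = ∑ j, D e j * x j := by
    intro x e; simp [Matrix.mulVec, dotProduct]
  have adj : ∀ (u : Fin m → ℝ) (x : Fin n → ℝ),
      ∑ e, u e * D.mulVec x e = ∑ j, Matrix.vecMul u D j * x j := by
    intro u x
    simp only [hmulv, hvec, Finset.mul_sum, Finset.sum_mul]
    rw [Finset.sum_comm]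
    refine Finset.sum_congr rfl fun j _ => Finset.sum_congr rfl fun e _ => by ring
  -- key variational inequality: ⟨w, r⟩ ≤ ⟨û, r⟩ for all feasible w
  have key : ∀ w : Fin m → ℝ, (∀ e, |w e| ≤ lam / 2) →
      ∑ e, w e * r e ≤ ∑ e, uhat e * r e := by
    intro w hw
    by_contra hcon
    push_neg at hcon
    set h : Fin m → ℝ := fun e => w e - uhat e with hh
    set B : ℝ := -∑ e, h e * r e with hB
    have hBneg : B < 0 := by
      have hsplit : ∑ e, h e * r e = ∑ e, w e * r e - ∑ e, uhat e * r e := by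
        rw [← Finset.sum_sub_distrib]
        exact Finset.sum_congr rfl fun e _ => by simp [hh]; ring
      rw [hB, hsplit]; linarith
    set A : ℝ := (1/2) * ∑ j, (Matrix.vecMul h D j) ^ 2 with hA
    have hAnn : 0 ≤ A := by positivity
    set A' : ℝ := max A 1 with hA'
    have hA'pos : (0:ℝ) < A' := lt_of_lt_of_le one_pos (le_max_right _ _)
    have hAA' : A ≤ A' := le_max_left _ _
    set t : ℝ := min 1 (-B / (2 * A')) with ht
    have ht0 : 0 < t := lt_min one_pos (div_pos (by linarith) (by linarith))
    have ht1 : t ≤ 1 := min_le_left _ _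
    have htA : t * A' ≤ -B / 2 := by
      have h1 : t ≤ -B / (2 * A') := min_le_right _ _
      have : t * A' ≤ (-B / (2 * A')) * A' := by nlinarith
      calc t * A' ≤ (-B / (2 * A')) * A' := this
        _ = -B / 2 := by field_simp
    have hfeas : ∀ e, |uhat e + t * h e| ≤ lam / 2 := by
      intro e
      have hrw : uhat e + t * h e = (1 - t) * uhat e + t * w e := by simp [hh]; ring
      rw [hrw]
      calc |(1 - t) * uhat e + t * w e| ≤ |(1 - t) * uhat e| + |t * w e| := abs_add_le _ _
        _ = (1 - t) * |uhat e| + t * |w e| := by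
            rw [abs_mul, abs_mul, abs_of_nonneg (by linarith), abs_of_nonneg ht0.le]
        _ ≤ (1 - t) * (lam / 2) + t * (lam / 2) := by
            have h1 := hbox e; have h2 := hw e
            have h3 := abs_nonneg (uhat e); have h4 := abs_nonneg (w e)
            nlinarith
        _ = lam / 2 := by ring
    have hineq := hmin (fun e => uhat e + t * h e) hfeas
    -- expand the quadratic objective
    have hlin : ∀ j, Matrix.vecMul (fun e => uhat e + t * h e) D j
        = Matrix.vecMul uhat D j + t * Matrix.vecMul h D j := by
      intro j
      simp only [hvec, Finset.mul_sum, ← Finset.sum_add_distrib]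
      exact Finset.sum_congr rfl fun e _ => by ring
    have hsq : ∑ j, (Matrix.vecMul (fun e => uhat e + t * h e) D j) ^ 2
        = ∑ j, (Matrix.vecMul uhat D j) ^ 2
          + 2 * t * (∑ j, Matrix.vecMul uhat D j * Matrix.vecMul h D j)
          + t ^ 2 * ∑ j, (Matrix.vecMul h D j) ^ 2 := by
      simp only [hlin, Finset.mul_sum, ← Finset.sum_add_distrib]
      exact Finset.sum_congr rfl fun j _ => by ring
    have hlinterm : ∑ e, (uhat e + t * h e) * D.mulVec y e
        = ∑ e, uhat e * D.mulVec y e + t * ∑ e, h e * D.mulVec y e := by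
      simp only [Finset.mul_sum, ← Finset.sum_add_distrib]
      exact Finset.sum_congr rfl fun e _ => by ring
    -- identify the gradient term: ∑ h r = ∑ h (Dy) - ∑_j a_j b_j
    have hr_split : ∑ e, h e * r e
        = ∑ e, h e * D.mulVec y e - ∑ j, Matrix.vecMul uhat D j * Matrix.vecMul h D j := by
      have h1 : ∑ e, h e * r e = ∑ e, h e * D.mulVec y e - ∑ e, h e * D.mulVec v e := by
        rw [← Finset.sum_sub_distrib]
        refine Finset.sum_congr rfl fun e _ => ?_
        have : r e = D.mulVec y e - D.mulVec v e := by
          simp only [hrdef, hmulv, hbhat, ← Finset.sum_sub_distrib]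
          exact Finset.sum_congr rfl fun j _ => by ring
        rw [this]; ring
      rw [h1, adj h v]
      congr 1
      exact Finset.sum_congr rfl fun j _ => by rw [hv]; ring
    have hnonneg : 0 ≤ t * B + t ^ 2 * A := by
      have := hineq
      simp only [hsq, hlinterm] at this
      have hB' : B = ∑ j, Matrix.vecMul uhat D j * Matrix.vecMul h D j
          - ∑ e, h e * D.mulVec y e := by rw [hB, hr_split]; ring
      rw [hB', hA]; nlinarith [this]
    have hcontr : t * B + t ^ 2 * A < 0 := by nlinarith
    linarith
  -- equality: ∑ û r = (λ/2) ∑ |r|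
  have hsign : ∀ e, |(if 0 ≤ r e then lam / 2 else -(lam / 2))| ≤ lam / 2 := by
    intro e; split <;> [rw [abs_of_nonneg (by linarith)]; rw [abs_of_nonpos (by linarith)]] <;> linarith
  have hsigval : ∑ e, (if 0 ≤ r e then lam / 2 else -(lam / 2)) * r e
      = (lam / 2) * ∑ e, |r e| := by
    rw [Finset.mul_sum]
    refine Finset.sum_congr rfl fun e _ => ?_
    by_cases hre : 0 ≤ r e
    · rw [if_pos hre, abs_of_nonneg hre]
    · rw [if_neg hre, abs_of_neg (lt_of_not_ge hre)]; ring
  have hup : ∑ e, uhat e * r e ≤ (lam / 2) * ∑ e, |r e| := by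
    rw [Finset.mul_sum]
    refine Finset.sum_le_sum fun e _ => ?_
    calc uhat e * r e ≤ |uhat e * r e| := le_abs_self _
      _ = |uhat e| * |r e| := abs_mul _ _
      _ ≤ (lam / 2) * |r e| := mul_le_mul_of_nonneg_right (hbox e) (abs_nonneg _)
  have heq : ∑ e, uhat e * r e = (lam / 2) * ∑ e, |r e| := by
    refine le_antisymm hup ?_
    rw [← hsigval]; exact key _ hsign
  -- assemble
  have hLHS1 : ∑ i, (y i - (y i - v i)) ^ 2 = ∑ i, (v i) ^ 2 :=
    Finset.sum_congr rfl fun i _ => by ring_nf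
  have hLHS2 : lam * ∑ e, |r e| = 2 * ∑ i, v i * bhat i := by
    have h2 : lam * ∑ e, |r e| = 2 * ((lam / 2) * ∑ e, |r e|) := by ring
    rw [h2, ← heq, hrdef, adj uhat bhat, hv]
  have hRHS : 2 * ∑ i, v i * β i ≤ lam * ∑ e, |D.mulVec β e| := by
    rw [← adj uhat β, Finset.mul_sum, Finset.mul_sum]
    refine Finset.sum_le_sum fun e _ => ?_
    calc 2 * (uhat e * D.mulVec β e) ≤ 2 * |uhat e * D.mulVec β e| := by
          have := le_abs_self (uhat e * D.mulVec β e); linarith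
      _ = 2 * (|uhat e| * |D.mulVec β e|) := by rw [abs_mul]
      _ ≤ 2 * ((lam / 2) * |D.mulVec β e|) := by
          have := mul_le_mul_of_nonneg_right (hbox e) (abs_nonneg (D.mulVec β e)); linarith
      _ = lam * |D.mulVec β e| := by ring
  have hfinal : ∑ i, (v i) ^ 2 + 2 * ∑ i, v i * bhat i
      ≤ ∑ i, (y i - β i) ^ 2 + 2 * ∑ i, v i * β i := by
    have : 0 ≤ ∑ i, (y i - β i - v i) ^ 2 := Finset.sum_nonneg fun i _ => sq_nonneg _
    have hexp : ∑ i, (y i - β i - v i) ^ 2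
        = ∑ i, (y i - β i) ^ 2 + 2 * ∑ i, v i * β i
          - (∑ i, (v i) ^ 2 + 2 * ∑ i, v i * bhat i) := by
      simp only [Finset.mul_sum, hbhat]
      rw [← Finset.sum_add_distrib, ← Finset.sum_add_distrib, ← Finset.sum_sub_distrib]
      exact Finset.sum_congr rfl fun i _ => by ring
    linarith [hexp ▸ this]
  calc ∑ i, (y i - (y i - v i)) ^ 2 + lam * ∑ e, |D.mulVec bhat e|
      = ∑ i, (v i) ^ 2 + 2 * ∑ i, v i * bhat i := by rw [hLHS1, ← hrdef, hLHS2]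
    _ ≤ ∑ i, (y i - β i) ^ 2 + 2 * ∑ i, v i * β i := hfinal
    _ ≤ ∑ i, (y i - β i) ^ 2 + lam * ∑ e, |D.mulVec β e| := by linarith
end
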